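/- Let f ∈ Cu(G), let χ be a character of G and let A be a van Hove sequence. If the Fourier–Bohr coefficient c_χ^A(f) exists uniformly, then for every van Hove sequence B the Fourier–Bohr coefficient c_χ^B(f) exists uniformly and c_χ^B(f) = c_χ^A(f). -/

import Mathlib

open MeasureTheory Filter Topology Pointwise ComplexConjugate
open scoped BigOperators

noncomputable section

variable {G : Type*} [AddCommGroup G] [UniformSpace G] [IsUniformAddGroup G]
  [LocallyCompactSpace G] [SecondCountableTopology G]
  [MeasurableSpace G] [BorelSpace G]

/-- The van Hove `K`-boundary of a set `B`:
`∂^K B = (closure (B+K) \ B) ∪ (((G \ B) - K) ∩ closure B)`. -/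
def vhBoundary (K B : Set G) : Set G :=
  (closure (B + K) \ B) ∪ ((Bᶜ - K) ∩ closure B)

/-- `A` is a van Hove sequence for the Haar measure `μ`: a sequence of compact sets of
positive measure such that for every compact `K` the relative measure of the van Hove
boundary tends to `0`. -/
def IsVanHove (μ : Measure G) (A : ℕ → Set G) : Prop :=
  (∀ n, IsCompact (A n)) ∧ (∀ n, 0 < μ (A n)) ∧
    ∀ K : Set G, IsCompact K →
      Tendsto (fun n => μ (vhBoundary K (A n)) / μ (A n)) atTop (nhds 0)

/-- `f ∈ Cu(G)`: bounded and uniformly continuous. -/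
def IsCu (f : G → ℂ) : Prop :=
  UniformContinuous f ∧ ∃ C : ℝ, ∀ x, ‖f x‖ ≤ C

/-- `χ` is a (continuous, unimodular) character of `G`, viewed as a `ℂ`-valued function. -/
def IsChar (χ : G → ℂ) : Prop :=
  Continuous χ ∧ (∀ x, ‖χ x‖ = 1) ∧ ∀ x y, χ (x + y) = χ x * χ y

/-- `f̃(x) = conj (f (-x))`. -/
def tilde (f : G → ℂ) : G → ℂ := fun x => conj (f (-x))

/-- `(T_t f)(x) = f (x - t)`. -/
def shiftBy (t : G) (f : G → ℂ) : G → ℂ := fun x => f (x - t)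

/-- Sup norm `‖f‖_∞`. -/
def supN (f : G → ℂ) : ℝ := ⨆ x, ‖f x‖

/-- The Fourier–Bohr coefficient `c_χ^A(f)` exists and equals `c`. -/
def FBTendsto (μ : Measure G) (A : ℕ → Set G) (χ f : G → ℂ) (c : ℂ) : Prop :=
  Tendsto (fun n => (μ (A n)).toReal⁻¹ • ∫ t in A n, conj (χ t) * f t ∂μ)
    atTop (nhds c)

/-- The Fourier–Bohr coefficient of `f` at `χ` exists uniformly (w.r.t. `A`) with value `c`:
`lim_n |A_n|⁻¹ ∫_{x+A_n} conj (χ t) f t dθ(t) = c` uniformly in `x ∈ G`. -/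
def FBUniform (μ : Measure G) (A : ℕ → Set G) (χ f : G → ℂ) (c : ℂ) : Prop :=
  TendstoUniformly
    (fun n (x : G) => (μ (A n)).toReal⁻¹ • ∫ t in x +ᵥ A n, conj (χ t) * f t ∂μ)
    (fun _ => c) atTop

/-- The Eberlein convolution `f ⊛_A g` exists and equals `F`:
for every `t`, `lim_n |A_n|⁻¹ ∫_{A_n} f s · g (t - s) dθ(s) = F t`. -/
def EberleinTendsto (μ : Measure G) (A : ℕ → Set G) (f g F : G → ℂ) : Prop :=
  ∀ t : G, Tendsto (fun n => (μ (A n)).toReal⁻¹ • ∫ s in A n, f s * g (t - s) ∂μ)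
    atTop (nhds (F t))

/-- The Besicovitch seminorm `‖f‖_{b,p,A}`. -/
def bNorm (μ : Measure G) (A : ℕ → Set G) (p : ℝ) (f : G → ℂ) : ℝ :=
  Filter.limsup
    (fun n => ((μ (A n)).toReal⁻¹ * ∫ t in A n, ‖f t‖ ^ p ∂μ) ^ (1 / p)) atTop

/-- `P` is a trigonometric polynomial: a finite linear combination of characters. -/
def IsTrigPoly (P : G → ℂ) : Prop :=
  ∃ (k : ℕ) (c : Fin k → ℂ) (χ : Fin k → G → ℂ),
    (∀ j, IsChar (χ j)) ∧ P = fun x => ∑ j, c j * χ j x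

/-- `f ∈ Bap^p_A(G)`: `f` can be approximated by trigonometric polynomials in `‖·‖_{b,p,A}`. -/
def BapP (μ : Measure G) (A : ℕ → Set G) (p : ℝ) (f : G → ℂ) : Prop :=
  ∀ ε : ℝ, 0 < ε → ∃ P : G → ℂ, IsTrigPoly P ∧ bNorm μ A p (fun x => f x - P x) < ε

/-- `f` is amenable w.r.t. `A` with mean `c`:
`lim_n |A_n|⁻¹ ∫_{x+A_n} f dθ = c` uniformly in `x ∈ G`. -/
def Amenable (μ : Measure G) (A : ℕ → Set G) (f : G → ℂ) (c : ℂ) : Prop :=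
  TendstoUniformly
    (fun n (x : G) => (μ (A n)).toReal⁻¹ • ∫ t in x +ᵥ A n, f t ∂μ)
    (fun _ => c) atTop

open scoped ENNReal symmDiff

theorem norm_inv_smul_sub_eq {E : Type*} [NormedAddCommGroup E] [NormedSpace ℝ E] {a : ℝ}
    (ha : 0 < a) (v w : E) : ‖a⁻¹ • v - w‖ = a⁻¹ * ‖v - a • w‖ := by
  rw [← Real.norm_of_nonneg (inv_nonneg.2 ha.le), ← norm_smul, smul_sub, smul_smul,
    inv_mul_cancel₀ ha.ne', one_smul, Real.norm_of_nonneg (inv_nonneg.2 ha.le)]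

theorem IsCompact.restrict_closure {X : Type*} [TopologicalSpace X] [R1Space X]
    [MeasurableSpace X] [BorelSpace X] {K : Set X} (hK : IsCompact K) (μ : Measure X) :
    μ.restrict (closure K) = μ.restrict K := by
  ext E hE
  rw [Measure.restrict_apply hE, Measure.restrict_apply hE]
  refine le_antisymm ?_ (measure_mono (Set.inter_subset_inter_right _ subset_closure))
  set T := toMeasurable μ (E ∩ K)
  have hKT : closure K ⊆ T ∪ Eᶜ :=
    hK.closure_subset_measurableSet ((measurableSet_toMeasurable _ _).union hE.compl)
      fun x hx => (em (x ∈ E)).imp (fun hxE => subset_toMeasurable _ _ ⟨hxE, hx⟩) id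
  calc μ (E ∩ closure K) ≤ μ T :=
        measure_mono fun x ⟨hxE, hx⟩ => (hKT hx).resolve_right (not_not.2 hxE)
    _ = μ (E ∩ K) := measure_toMeasurable _

theorem norm_setIntegral_sub_setIntegral_le {X E : Type*} [MeasurableSpace X]
    [NormedAddCommGroup E] [NormedSpace ℝ E] {μ : Measure X} {g : X → E} {M : ℝ}
    (hM : ∀ x, ‖g x‖ ≤ M) {S T : Set X} (hS : MeasurableSet S) (hT : MeasurableSet T)
    (hgS : IntegrableOn g S μ) (hgT : IntegrableOn g T μ) (hST : μ (S ∆ T) ≠ ∞) :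
    ‖∫ x in S, g x ∂μ - ∫ x in T, g x ∂μ‖ ≤ M * μ.real (S ∆ T) := by
  rw [← integral_indicator hS, ← integral_indicator hT,
    ← integral_sub (hgS.integrable_indicator hS) (hgT.integrable_indicator hT)]
  have hpt : ∀ x, ‖S.indicator g x - T.indicator g x‖ ≤ (S ∆ T).indicator (fun _ => M) x := by
    intro x
    by_cases hxS : x ∈ S <;> by_cases hxT : x ∈ T <;> simp [hxS, hxT, Set.mem_symmDiff, hM]
  calc _ ≤ ∫ x, (S ∆ T).indicator (fun _ => M) x ∂μ :=
        norm_integral_le_of_norm_le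
          ((integrable_indicator_iff (hS.symmDiff hT)).2 (integrableOn_const hST))
          (ae_of_all _ hpt)
    _ = M * μ.real (S ∆ T) := by
      rw [integral_indicator_const _ (hS.symmDiff hT), smul_eq_mul, mul_comm]

theorem setIntegral_vadd {G E : Type*} [AddGroup G] [MeasurableSpace G] [MeasurableAdd G]
    [NormedAddCommGroup E] [NormedSpace ℝ E] (μ : Measure G) [μ.IsAddLeftInvariant]
    (g : G → E) (x : G) (S : Set G) :
    ∫ t in x +ᵥ S, g t ∂μ = ∫ u in S, g (x + u) ∂μ :=
  (measurePreserving_vadd x μ).setIntegral_image_emb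
    (MeasurableEquiv.vadd x).measurableEmbedding g S

theorem IsCompact.setIntegral_vadd_closure {G E : Type*} [AddGroup G] [TopologicalSpace G]
    [IsTopologicalAddGroup G] [MeasurableSpace G] [BorelSpace G] [NormedAddCommGroup E]
    [NormedSpace ℝ E] {S : Set G} (hS : IsCompact S) (μ : Measure G) (g : G → E) (x : G) :
    ∫ t in x +ᵥ closure S, g t ∂μ = ∫ t in x +ᵥ S, g t ∂μ := by
  rw [← closure_vadd, (hS.vadd x).restrict_closure μ]

theorem norm_setIntegral_vadd_sub_smul_le {G E : Type*} [AddCommGroup G] [MeasurableSpace G]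
    [MeasurableAdd₂ G] [NormedAddCommGroup E] [NormedSpace ℝ E] [CompleteSpace E]
    (μ : Measure G) [μ.IsAddLeftInvariant] {g : G → E} (hg : StronglyMeasurable g) {M : ℝ}
    (hM : ∀ t, ‖g t‖ ≤ M) {P Q : Set G} (hQ : MeasurableSet Q)
    (hPf : μ P ≠ ∞) (hQf : μ Q ≠ ∞) (hP0 : 0 < μ.real P) {c : E} {δ η : ℝ}
    (hPc : ∀ y : G, ‖∫ t in y +ᵥ P, g t ∂μ - μ.real P • c‖ ≤ μ.real P * δ)
    (hQη : ∀ s ∈ P, μ.real ((s +ᵥ Q) ∆ Q) ≤ η) (x : G) :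
    ‖∫ t in x +ᵥ Q, g t ∂μ - μ.real Q • c‖ ≤ M * η + μ.real Q * δ := by
  set a := μ.real P
  set b := μ.real Q
  have := isFiniteMeasure_restrict.2 hPf
  have := isFiniteMeasure_restrict.2 hQf
  set Φ : G → G → E := fun s u => g (x + (s + u))
  have hΦ : Integrable (Function.uncurry Φ) ((μ.restrict P).prod (μ.restrict Q)) :=
    (integrable_const M).mono' (hg.comp_measurable (by fun_prop)).aestronglyMeasurable
      (ae_of_all _ fun _ => hM _)
  have hgx : ∀ S : Set G, μ S ≠ ∞ → IntegrableOn (fun u => g (x + u)) S μ := fun S hS =>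
    Measure.integrableOn_of_bounded hS (hg.comp_measurable (by fun_prop)).aestronglyMeasurable
      (ae_of_all _ fun _ => hM _)
  have hJ : ∀ s ∈ P, ‖∫ u in Q, g (x + u) ∂μ - ∫ u in Q, Φ s u ∂μ‖ ≤ M * η := by
    intro s hs
    have hsQ : μ (s +ᵥ Q) ≠ ∞ := by rwa [measure_vadd]
    rw [show ∫ u in Q, Φ s u ∂μ = ∫ v in s +ᵥ Q, g (x + v) ∂μ from
      (setIntegral_vadd μ (fun v => g (x + v)) s Q).symm, norm_sub_rev]
    calc _ ≤ M * μ.real ((s +ᵥ Q) ∆ Q) :=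
          norm_setIntegral_sub_setIntegral_le (fun v => hM (x + v)) (hQ.const_vadd s) hQ
            (hgx _ hsQ) (hgx _ hQf) (measure_symmDiff_ne_top hsQ hQf)
      _ ≤ M * η := mul_le_mul_of_nonneg_left (hQη s hs) ((norm_nonneg _).trans (hM 0))
  have hL : ∀ u ∈ Q, ‖∫ s in P, Φ s u ∂μ - a • c‖ ≤ a * δ := by
    intro u _
    have hΦu : ∫ s in P, Φ s u ∂μ = ∫ t in (x + u) +ᵥ P, g t ∂μ := by
      rw [setIntegral_vadd]
      congr 1 with s
      exact congrArg g (by abel)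
    rw [hΦu]; exact hPc _
  have hJi : Integrable (fun s => ∫ u in Q, Φ s u ∂μ) (μ.restrict P) := hΦ.integral_prod_left
  have hLi : Integrable (fun u => ∫ s in P, Φ s u ∂μ) (μ.restrict Q) := hΦ.integral_prod_right
  have hsplit : a • (∫ u in Q, g (x + u) ∂μ - b • c)
      = ∫ s in P, (∫ u in Q, g (x + u) ∂μ - ∫ u in Q, Φ s u ∂μ) ∂μ
        + ∫ u in Q, (∫ s in P, Φ s u ∂μ - a • c) ∂μ := by
    rw [integral_sub (integrable_const _) hJi,
      integral_sub hLi (integrable_const _), integral_integral_swap hΦ,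
      setIntegral_const, setIntegral_const, smul_sub, smul_smul, smul_smul, mul_comm]
    abel
  have hbound : a * ‖∫ u in Q, g (x + u) ∂μ - b • c‖ ≤ a * (M * η + b * δ) :=
    calc a * ‖∫ u in Q, g (x + u) ∂μ - b • c‖
        = ‖a • (∫ u in Q, g (x + u) ∂μ - b • c)‖ := by
          rw [norm_smul, Real.norm_of_nonneg hP0.le]
      _ ≤ M * η * a + a * δ * b := by
          rw [hsplit]
          exact (norm_add_le _ _).trans (add_le_add
            (norm_setIntegral_le_of_norm_le_const hPf.lt_top hJ)
            (norm_setIntegral_le_of_norm_le_const hQf.lt_top hL))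
      _ = a * (M * η + b * δ) := by ring
  rw [setIntegral_vadd]
  exact le_of_mul_le_mul_left hbound hP0

theorem symmDiff_vadd_closure_subset_vhBoundary {G : Type*} [AddCommGroup G] [UniformSpace G]
    [ContinuousAdd G] {K B : Set G} {s : G} (hs : s ∈ K)
    (hs' : -s ∈ K) : (s +ᵥ closure B) ∆ closure B ⊆ vhBoundary K B := by
  rintro v (⟨hv, hvB⟩ | ⟨hvB, hv⟩)
  · refine Or.inl ⟨?_, fun h => hvB (subset_closure h)⟩
    rw [← closure_vadd] at hv
    refine closure_mono ?_ hv
    rintro _ ⟨w, hw, rfl⟩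
    exact ⟨w, hw, s, hs, add_comm _ _⟩
  · have hvs : v - s ∉ B := fun h => hv ⟨v - s, subset_closure h, by simp [vadd_eq_add]⟩
    exact Or.inr ⟨Set.mem_sub.2 ⟨v - s, hvs, -s, hs', by abel⟩, hvB⟩

theorem IsCompact.measure_vhBoundary_ne_top {G : Type*} [AddCommGroup G] [UniformSpace G]
    [ContinuousAdd G] [MeasurableSpace G] {μ : Measure G} [IsFiniteMeasureOnCompacts μ]
    {K B : Set G} (hB : IsCompact B) (hK : IsCompact K) : μ (vhBoundary K B) ≠ ∞ := by
  refine ne_top_of_le_ne_top (((hB.add hK).closure.union hB.closure).measure_ne_top (μ := μ)) ?_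
  exact measure_mono (Set.union_subset_union Set.sdiff_subset Set.inter_subset_right)

theorem IsVanHove.tendsto_measureReal_vhBoundary_div {G : Type*} [AddCommGroup G]
    [UniformSpace G] [MeasurableSpace G] {μ : Measure G} {A : ℕ → Set G} (hA : IsVanHove μ A)
    {K : Set G} (hK : IsCompact K) :
    Tendsto (fun n => μ.real (vhBoundary K (A n)) / μ.real (A n)) atTop (𝓝 0) := by
  simpa only [Function.comp_def, measureReal_def, ← ENNReal.toReal_div, ENNReal.toReal_zero] using
    (ENNReal.tendsto_toReal ENNReal.zero_ne_top).comp (hA.2.2 K hK)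

section VanHoveAverages

variable {G : Type*} [AddCommGroup G] [UniformSpace G] [IsUniformAddGroup G]
  [SecondCountableTopology G] [MeasurableSpace G] [BorelSpace G]
  {μ : Measure G} [μ.IsAddHaarMeasure] {g : G → ℂ} {M : ℝ} {c : ℂ}

-- `G` is not assumed Hausdorff, so the compact sets `P` and `Q` need not be measurable;
-- their closures carry the same measure and the same integrals.
theorem dist_average_vadd_le (hg : Measurable g) (hM : ∀ t, ‖g t‖ ≤ M) {P Q : Set G}
    (hPc : IsCompact P) (hQc : IsCompact Q) (hP0 : 0 < μ P) (hQ0 : 0 < μ Q) {δ : ℝ}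
    (hP : ∀ y : G, dist c ((μ P).toReal⁻¹ • ∫ t in y +ᵥ P, g t ∂μ) ≤ δ) (x : G) :
    dist c ((μ Q).toReal⁻¹ • ∫ t in x +ᵥ Q, g t ∂μ)
      ≤ M * (μ.real (vhBoundary (closure P ∪ -closure P) Q) / μ.real Q) + δ := by
  have hPr : μ.real (closure P) = μ.real P := congrArg ENNReal.toReal (hPc.measure_closure μ)
  have hQr : μ.real (closure Q) = μ.real Q := congrArg ENNReal.toReal (hQc.measure_closure μ)
  have hPr0 : 0 < μ.real P := ENNReal.toReal_pos hP0.ne' hPc.measure_ne_top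
  have hQr0 : 0 < μ.real Q := ENNReal.toReal_pos hQ0.ne' hQc.measure_ne_top
  have hPavg : ∀ y : G, ‖∫ t in y +ᵥ closure P, g t ∂μ - μ.real (closure P) • c‖
      ≤ μ.real (closure P) * δ := by
    intro y
    have hy := hP y
    rw [dist_comm, dist_eq_norm, ← measureReal_def, norm_inv_smul_sub_eq hPr0,
      inv_mul_le_iff₀ hPr0] at hy
    rwa [hPc.setIntegral_vadd_closure, hPr]
  set W := vhBoundary (closure P ∪ -closure P) Q
  have hQW : ∀ s ∈ closure P, μ.real ((s +ᵥ closure Q) ∆ closure Q) ≤ μ.real W := fun s hs =>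
    measureReal_mono
      (symmDiff_vadd_closure_subset_vhBoundary (Or.inl hs) (Or.inr (by simpa using hs)))
      (hQc.measure_vhBoundary_ne_top (hPc.closure.union hPc.closure.neg))
  have hQavg := norm_setIntegral_vadd_sub_smul_le μ hg.stronglyMeasurable hM
    isClosed_closure.measurableSet hPc.closure.measure_ne_top hQc.closure.measure_ne_top
    (hPr ▸ hPr0) hPavg hQW x
  rw [hQc.setIntegral_vadd_closure, hQr] at hQavg
  rw [dist_comm, dist_eq_norm, ← measureReal_def, norm_inv_smul_sub_eq hQr0]
  calc (μ.real Q)⁻¹ * ‖∫ t in x +ᵥ Q, g t ∂μ - μ.real Q • c‖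
      ≤ (μ.real Q)⁻¹ * (M * μ.real W + μ.real Q * δ) :=
        mul_le_mul_of_nonneg_left hQavg (inv_nonneg.2 hQr0.le)
    _ = M * (μ.real W / μ.real Q) + δ := by field_simp

theorem Amenable.of_isVanHove (hg : Measurable g) (hM : ∀ t, ‖g t‖ ≤ M) {A B : ℕ → Set G}
    (hA : IsVanHove μ A) (hB : IsVanHove μ B) (h : Amenable μ A g c) : Amenable μ B g c := by
  rw [Amenable, Metric.tendstoUniformly_iff] at h ⊢
  intro ε hε
  obtain ⟨m, hm⟩ := (h (ε / 2) (half_pos hε)).exists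
  have hPc := (hA.1 m).closure
  have hW : Tendsto (fun n => M * (μ.real (vhBoundary (closure (A m) ∪ -closure (A m)) (B n))
      / μ.real (B n))) atTop (𝓝 0) := by
    simpa using (hB.tendsto_measureReal_vhBoundary_div (hPc.union hPc.neg)).const_mul M
  filter_upwards [hW.eventually_lt_const (half_pos hε)] with n hn x
  have := dist_average_vadd_le hg hM (hA.1 m) (hB.1 n) (hA.2.1 m) (hB.2.1 n)
    (fun y => (hm y).le) x
  linarith

end VanHoveAverages

/-- if `c_χ^A(f)` exists uniformly then, for every van Hove sequence `B`,
`c_χ^B(f)` exists uniformly with the same value. -/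
theorem stmt19 (μ : Measure G) [μ.IsAddHaarMeasure] (A : ℕ → Set G)
    (hA : IsVanHove μ A) (f χ : G → ℂ) (hf : IsCu f) (hχ : IsChar χ) (c : ℂ)
    (h : FBUniform μ A χ f c) :
    ∀ B : ℕ → Set G, IsVanHove μ B → FBUniform μ B χ f c := by
  obtain ⟨hfu, C, hC⟩ := hf
  obtain ⟨hχc, hχ1, -⟩ := hχ
  have hg : Measurable fun t => conj (χ t) * f t :=
    ((Complex.continuous_conj.comp hχc).mul hfu.continuous).measurable
  have hgC : ∀ t, ‖conj (χ t) * f t‖ ≤ C := fun t => by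
    rw [norm_mul, RCLike.norm_conj, hχ1, one_mul]; exact hC t
  exact fun B hB => Amenable.of_isVanHove hg hgC hA hB h
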